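/- For integers P ≥ 1 and n with 1 ≤ n ≤ P, define T_n^{(P)}(x) = ∫_{ℝ²} e^{2πi x(ξ₁+ξ₂)} 1_{[−2P,0]}(ξ₁) 1_{[0,1/2]}(ξ₂) 1_{[n,n+1]}(ξ₂−ξ₁) dξ₁ dξ₂ (an absolutely convergent integral over a bounded region). Then: (i) for every integer P ≥ 1, every integer n with 1 ≤ n ≤ P, and every x ∈ ℝ, T_n^{(P)}(x) = e^{−2πi(n−1)x} · T_1^{(1)}(x); consequently (ii) for every r ∈ (0, ∞), ‖ ( Σ_{n=1}^{P} |T_n^{(P)}|² )^{1/2} ‖_{L^r(ℝ)} = P^{1/2} ‖ T_1^{(1)} ‖_{L^r(ℝ)}. -/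

import Mathlib

open MeasureTheory Real Set
open scoped ENNReal

/-!
Once `ξ₂ ∈ [0, 1/2]` and `ξ₂ - ξ₁ ∈ [n, n + 1]` with `1 ≤ n ≤ P`, the constraint
`ξ₁ ∈ [-2P, 0]` holds automatically, so `T_n^{(P)}` is the Fourier integral of the
indicator of a strip that depends on `n` only. Translating `ξ₁` by `n - 1` moves the strip
for `n` onto the strip for `1` and multiplies the phase by `e^{2πi(n-1)x}`; hence every
`|T_n^{(P)}|` equals `|T_1^{(1)}|`, and the square function is `√P |T_1^{(1)}|` pointwise.
-/

/-- `T_n^{(P)}(x) = ∫∫ e^{2πix(ξ₁+ξ₂)} 1_{[-2P,0]}(ξ₁) 1_{[0,1/2]}(ξ₂)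
1_{[n,n+1]}(ξ₂-ξ₁) dξ₁ dξ₂`. -/
noncomputable def T (P n : ℤ) (x : ℝ) : ℂ :=
  ∫ ξ : ℝ × ℝ, Complex.exp (((2 * Real.pi * x * (ξ.1 + ξ.2) : ℝ) : ℂ) * Complex.I) *
    (Set.Icc (-(2 * (P : ℝ))) 0).indicator 1 ξ.1 *
    (Set.Icc (0 : ℝ) (1 / 2)).indicator 1 ξ.2 *
    (Set.Icc (n : ℝ) ((n : ℝ) + 1)).indicator 1 (ξ.2 - ξ.1)

noncomputable def phaseStrip (a x : ℝ) (ξ : ℝ × ℝ) : ℂ :=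
  Complex.exp (((2 * π * x * (ξ.1 + ξ.2) : ℝ) : ℂ) * Complex.I) *
    (Icc (0 : ℝ) (1 / 2)).indicator 1 ξ.2 *
    (Icc a (a + 1)).indicator 1 (ξ.2 - ξ.1)

lemma phaseStrip_add_fst (a t x : ℝ) (ξ : ℝ × ℝ) :
    phaseStrip a x (ξ + (t, 0)) =
      Complex.exp (((2 * π * x * t : ℝ) : ℂ) * Complex.I) * phaseStrip (a + t) x ξ := by
  have hmem : ξ.2 - (ξ.1 + t) ∈ Icc a (a + 1) ↔ ξ.2 - ξ.1 ∈ Icc (a + t) (a + t + 1) := by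
    simp only [mem_Icc]
    constructor <;> rintro ⟨h₁, h₂⟩ <;> constructor <;> linarith
  have hphase : Complex.exp (((2 * π * x * (ξ.1 + t + ξ.2) : ℝ) : ℂ) * Complex.I) =
      Complex.exp (((2 * π * x * t : ℝ) : ℂ) * Complex.I) *
        Complex.exp (((2 * π * x * (ξ.1 + ξ.2) : ℝ) : ℂ) * Complex.I) := by
    rw [← Complex.exp_add]; push_cast; ring_nf
  simp only [phaseStrip, Prod.fst_add, Prod.snd_add, add_zero, indicator_apply, hmem, hphase,
    Pi.one_apply]
  ring

lemma integral_phaseStrip_add (a t x : ℝ) :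
    ∫ ξ, phaseStrip (a + t) x ξ =
      Complex.exp (((-2 * π * t * x : ℝ) : ℂ) * Complex.I) * ∫ ξ, phaseStrip a x ξ := by
  have hunit : Complex.exp (((-2 * π * t * x : ℝ) : ℂ) * Complex.I) *
      Complex.exp (((2 * π * x * t : ℝ) : ℂ) * Complex.I) = 1 := by
    rw [← Complex.exp_add, ← Complex.exp_zero]; push_cast; ring_nf
  rw [← integral_add_right_eq_self (phaseStrip a x) ((t, 0) : ℝ × ℝ)]
  simp only [phaseStrip_add_fst, integral_const_mul, ← mul_assoc, hunit, one_mul]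

lemma T_eq_integral_phaseStrip {P n : ℤ} (hn : 1 / 2 ≤ (n : ℝ)) (hnP : (n : ℝ) + 1 ≤ 2 * P)
    (x : ℝ) : T P n x = ∫ ξ, phaseStrip n x ξ := by
  refine integral_congr_ae (Filter.Eventually.of_forall fun ξ => ?_)
  by_cases h₂ : ξ.2 ∈ Icc (0 : ℝ) (1 / 2)
  · by_cases h₃ : ξ.2 - ξ.1 ∈ Icc (n : ℝ) (n + 1)
    · have hξ₁ : ξ.1 ∈ Icc (-(2 * (P : ℝ))) 0 :=
        ⟨by linarith [h₂.1, h₃.2], by linarith [h₂.2, h₃.1]⟩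
      simp only [phaseStrip, indicator_of_mem hξ₁, Pi.one_apply, mul_one]
    · simp only [phaseStrip, indicator_of_notMem h₃, mul_zero]
  · simp only [phaseStrip, indicator_of_notMem h₂, mul_zero, zero_mul]

lemma eLpNorm_sqrt_sum_sq_of_norm_eq {α ι E : Type*} [MeasurableSpace α]
    [NormedAddCommGroup E] {μ : Measure α} {p : ℝ≥0∞} {s : Finset ι} {f : ι → α → E}
    {g : α → E} (h : ∀ i ∈ s, ∀ x, ‖f i x‖ = ‖g x‖) :
    eLpNorm (fun x => √(∑ i ∈ s, ‖f i x‖ ^ 2)) p μ =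
      ENNReal.ofReal √(s.card : ℝ) * eLpNorm g p μ := by
  have hpointwise : (fun x => √(∑ i ∈ s, ‖f i x‖ ^ 2)) = √(s.card : ℝ) • fun x => ‖g x‖ := by
    funext x
    rw [Finset.sum_congr rfl fun i hi => by rw [h i hi x], Finset.sum_const, nsmul_eq_mul,
      Real.sqrt_mul (Nat.cast_nonneg _), Real.sqrt_sq (norm_nonneg _)]
    rfl
  rw [hpointwise, eLpNorm_const_smul, eLpNorm_norm, Real.enorm_of_nonneg (Real.sqrt_nonneg _)]

lemma T_eq_exp_mul_T_one_one {P n : ℤ} (hn : 1 ≤ n) (hnP : n ≤ P) (x : ℝ) :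
    T P n x =
      Complex.exp (((-2 * π * ((n : ℝ) - 1) * x : ℝ) : ℂ) * Complex.I) * T 1 1 x := by
  have hn' : (1 : ℝ) ≤ n := by exact_mod_cast hn
  have hnP' : (n : ℝ) ≤ P := by exact_mod_cast hnP
  rw [T_eq_integral_phaseStrip (by linarith) (by linarith),
    T_eq_integral_phaseStrip (by norm_num) (by norm_num), ← integral_phaseStrip_add,
    Int.cast_one, add_sub_cancel]

/-- **modulation invariance in the counterexample.**
(i) For `1 ≤ n ≤ P`, `T_n^{(P)}(x) = e^{-2πi(n-1)x} T_1^{(1)}(x)`; consequently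
(ii) for every `r ∈ (0,∞)`,
`‖(Σ_{n=1}^P |T_n^{(P)}|²)^{1/2}‖_{L^r} = P^{1/2} ‖T_1^{(1)}‖_{L^r}`. -/
theorem counterexample_modulation_invariance :
    (∀ P n : ℤ, 1 ≤ P → 1 ≤ n → n ≤ P → ∀ x : ℝ,
      T P n x =
        Complex.exp (((-2 * Real.pi * ((n : ℝ) - 1) * x : ℝ) : ℂ) * Complex.I) *
          T 1 1 x) ∧
    (∀ r : ℝ, 0 < r → ∀ P : ℤ, 1 ≤ P →
      eLpNorm (fun x : ℝ =>
          Real.sqrt (∑ n ∈ Finset.Icc (1 : ℤ) P, ‖T P n x‖ ^ 2))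
          (ENNReal.ofReal r) volume =
        ENNReal.ofReal (Real.sqrt (P : ℝ)) *
          eLpNorm (T 1 1) (ENNReal.ofReal r) volume) := by
  refine ⟨fun P n _ hn hnP x => T_eq_exp_mul_T_one_one hn hnP x, fun r _ P hP => ?_⟩
  have hnorm : ∀ n ∈ Finset.Icc (1 : ℤ) P, ∀ x, ‖T P n x‖ = ‖T 1 1 x‖ := fun n hn x => by
    obtain ⟨hn₁, hnP⟩ := Finset.mem_Icc.mp hn
    rw [T_eq_exp_mul_T_one_one hn₁ hnP, norm_mul, Complex.norm_exp_ofReal_mul_I, one_mul]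
  rw [eLpNorm_sqrt_sum_sq_of_norm_eq hnorm, Int.card_Icc, add_sub_cancel_right,
    ← Int.cast_natCast, Int.toNat_of_nonneg (by omega)]
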